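/- arXiv:1907.08865 — 5 statements merged into one kernel-verified Lean document; each statement's English description precedes it below -/
import Mathlib

section
/- Every hierarchically colored cograph is properly colored, i.e., if $(G,\sigma)$ is an hc-cograph then $\sigma(u) \neq \sigma(v)$ for every edge $uv$ of $G$. -/
namespace RBMGPaper

variable {V : Type*} {C : Type*}

/-- `HCOn G σ A` asserts that the subgraph of the vertex-colored graph `(G, σ)` induced on the
vertex set `A` is a hierarchically colored cograph, built recursively via (K1)–(K3). -/
inductive HCOn (G : SimpleGraph V) (σ : V → C) : Set V → Prop
  | single (v : V) : HCOn G σ {v}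
  | join (A B : Set V) (hA : A.Nonempty) (hB : B.Nonempty) (hdisj : Disjoint A B)
      (hadj : ∀ a ∈ A, ∀ b ∈ B, G.Adj a b)
      (hcol : Disjoint (σ '' A) (σ '' B))
      (h1 : HCOn G σ A) (h2 : HCOn G σ B) : HCOn G σ (A ∪ B)
  | union (A B : Set V) (hA : A.Nonempty) (hB : B.Nonempty) (hdisj : Disjoint A B)
      (hadj : ∀ a ∈ A, ∀ b ∈ B, ¬ G.Adj a b)
      (hcol : σ '' A ⊆ σ '' B ∨ σ '' B ⊆ σ '' A)
      (h1 : HCOn G σ A) (h2 : HCOn G σ B) : HCOn G σ (A ∪ B)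

/-- `(G, σ)` is a hierarchically colored cograph (hc-cograph). -/
def IsHCCograph (G : SimpleGraph V) (σ : V → C) : Prop :=
  HCOn G σ Set.univ

/-- `CographOn G A` asserts that the subgraph of `G` induced on `A` is a cograph. -/
inductive CographOn (G : SimpleGraph V) : Set V → Prop
  | single (v : V) : CographOn G {v}
  | union (A B : Set V) (hA : A.Nonempty) (hB : B.Nonempty) (hdisj : Disjoint A B)
      (hadj : ∀ a ∈ A, ∀ b ∈ B, ¬ G.Adj a b)
      (h1 : CographOn G A) (h2 : CographOn G B) : CographOn G (A ∪ B)
  | join (A B : Set V) (hA : A.Nonempty) (hB : B.Nonempty) (hdisj : Disjoint A B)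
      (hadj : ∀ a ∈ A, ∀ b ∈ B, G.Adj a b)
      (h1 : CographOn G A) (h2 : CographOn G B) : CographOn G (A ∪ B)

/-- `G` is a cograph. -/
def IsCograph (G : SimpleGraph V) : Prop := CographOn G Set.univ

/-- The set `s` induces a biclique (complete bipartite graph, possibly `K₁`) in `G`. -/
def IsBiclique (G : SimpleGraph V) (s : Set V) : Prop :=
  ∃ A B : Set V, s = A ∪ B ∧ Disjoint A B ∧
    ∀ u ∈ s, ∀ v ∈ s, (G.Adj u v ↔ ((u ∈ A ∧ v ∈ B) ∨ (u ∈ B ∧ v ∈ A)))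

/-- `G` is a bicluster graph: every connected component is a biclique. -/
def IsBiclusterGraph (G : SimpleGraph V) : Prop :=
  ∀ c : G.ConnectedComponent, IsBiclique G c.supp

/-- `addHub G` is the graph `G + x`: a new vertex (`none`) adjacent to all vertices of `G`. -/
def addHub (G : SimpleGraph V) : SimpleGraph (Option V) where
  Adj u v :=
    (∃ a b, u = some a ∧ v = some b ∧ G.Adj a b) ∨
    (u = none ∧ ∃ b, v = some b) ∨ ((∃ a, u = some a) ∧ v = none)
  symm := by
    constructor
    rintro u v (⟨a, b, rfl, rfl, h⟩ | ⟨rfl, b, rfl⟩ | ⟨⟨a, rfl⟩, rfl⟩)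
    · exact Or.inl ⟨b, a, rfl, rfl, h.symm⟩
    · exact Or.inr (Or.inr ⟨⟨b, rfl⟩, rfl⟩)
    · exact Or.inr (Or.inl ⟨rfl, a, rfl⟩)
  loopless := by
    constructor
    rintro u (⟨a, b, rfl, hb, h⟩ | ⟨rfl, b, hb⟩ | ⟨⟨a, rfl⟩, hb⟩)
    · exact G.irrefl (Option.some_injective V hb ▸ h)
    · exact nomatch hb
    · exact nomatch hb


namespace HCOn

variable {G : SimpleGraph V} {σ : V → C}

theorem color_ne_of_adj {s : Set V} (hs : HCOn G σ s) :
    ∀ u ∈ s, ∀ v ∈ s, G.Adj u v → σ u ≠ σ v := by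
  induction hs with
  | single w =>
    rintro u rfl v rfl huv
    exact (G.irrefl huv).elim
  | join A B _ _ _ _ hcol _ _ ihA ihB =>
    have hAB : ∀ a ∈ A, ∀ b ∈ B, σ a ≠ σ b := fun a ha b hb =>
      Set.disjoint_iff_forall_ne.mp hcol (Set.mem_image_of_mem σ ha) (Set.mem_image_of_mem σ hb)
    rintro u (hu | hu) v (hv | hv) huv
    · exact ihA u hu v hv huv
    · exact hAB u hu v hv
    · exact (hAB v hv u hu).symm
    · exact ihB u hu v hv huv
  | union A B _ _ _ hadj _ _ _ ihA ihB =>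
    rintro u (hu | hu) v (hv | hv) huv
    · exact ihA u hu v hv huv
    · exact (hadj u hu v hv huv).elim
    · exact (hadj v hv u hu huv.symm).elim
    · exact ihB u hu v hv huv

end HCOn

theorem hcCograph_properlyColored_general (G : SimpleGraph V) (σ : V → C)
    (h : IsHCCograph G σ) :
    ∀ u v : V, G.Adj u v → σ u ≠ σ v :=
  fun u v => h.color_ne_of_adj u trivial v trivial

/-- Every hierarchically colored cograph is properly colored: if `(G, σ)` is an
hc-cograph then `σ u ≠ σ v` for every edge `uv` of `G`. -/
theorem hcCograph_properlyColored [Fintype V] (G : SimpleGraph V) (σ : V → C)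
    (h : IsHCCograph G σ) :
    ∀ u v : V, G.Adj u v → σ u ≠ σ v :=
  hcCograph_properlyColored_general G σ h

end RBMGPaper
end

section
/- An edgeless vertex-colored graph whose vertices carry at least two distinct colors is not an hc-cograph. In particular, the graph on two vertices $x,y$ with no edge and $\sigma(x) \neq \sigma(y)$ is a cograph but not an hc-cograph, so not every vertex-colored cograph is an hc-cograph. -/
namespace RBMGPaper

variable {V : Type*} {C : Type*}

/-- Without edges (K2) never applies, and (K3) with comparable color sets keeps the larger one. -/
theorem HCOn.subsingleton_image_of_bot {σ : V → C} {A : Set V}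
    (h : HCOn (⊥ : SimpleGraph V) σ A) : (σ '' A).Subsingleton := by
  induction h with
  | single v => simp
  | join A B hA hB _ hadj => exact absurd (hadj _ hA.some_mem _ hB.some_mem) id
  | union A B _ _ _ _ hcol _ _ ihA ihB =>
    rw [Set.image_union]
    rcases hcol with hAB | hBA
    · rwa [Set.union_eq_self_of_subset_left hAB]
    · rwa [Set.union_eq_self_of_subset_right hBA]

theorem IsHCCograph.apply_eq_of_bot {σ : V → C} (h : IsHCCograph (⊥ : SimpleGraph V) σ)
    (u v : V) : σ u = σ v :=
  HCOn.subsingleton_image_of_bot h (Set.mem_image_of_mem σ trivial)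
    (Set.mem_image_of_mem σ trivial)

theorem isCograph_bot_bool : IsCograph (⊥ : SimpleGraph Bool) := by
  have huniv : (Set.univ : Set Bool) = {false} ∪ {true} := by
    ext b; cases b <;> simp
  rw [IsCograph, huniv]
  exact .union _ _ (Set.singleton_nonempty _) (Set.singleton_nonempty _) (by simp)
    (fun _ _ _ _ => id) (.single false) (.single true)

/-- An edgeless vertex-colored graph whose vertices carry at least two distinct
colors is not an hc-cograph.  In particular, the graph on two vertices with no edge and distinct
colors on the two vertices is a cograph but not an hc-cograph. -/
theorem edgeless_two_colors_not_hcCograph :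
    (∀ (V C : Type*) [Fintype V] (G : SimpleGraph V) (σ : V → C),
      G = ⊥ → (∃ u v : V, σ u ≠ σ v) → ¬ IsHCCograph G σ) ∧
    IsCograph (⊥ : SimpleGraph Bool) ∧
    (∀ (C : Type*) (σ : Bool → C), σ false ≠ σ true →
      ¬ IsHCCograph (⊥ : SimpleGraph Bool) σ) := by
  refine ⟨?_, isCograph_bot_bool, fun C σ hσ h => hσ (h.apply_eq_of_bot false true)⟩
  rintro V C _ G σ rfl ⟨u, v, huv⟩ h
  exact huv (h.apply_eq_of_bot u v)

end RBMGPaper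
end

section
/- For every cograph $G$ there exists a vertex coloring $\sigma$ of $G$ such that $(G,\sigma)$ is an hc-cograph. -/
namespace RBMGPaper

variable {V : Type*} {C : Type*}

section Coloring

variable {D : Type*} {G : SimpleGraph V} {σ σ' : V → C} {A : Set V}

theorem HCOn.congr_eqOn (h : HCOn G σ A) (he : Set.EqOn σ σ' A) : HCOn G σ' A := by
  induction h with
  | single v => exact .single v
  | join A B hA hB hd hadj hcol _ _ ihA ihB =>
    have heA := he.mono Set.subset_union_left
    have heB := he.mono Set.subset_union_right
    refine .join A B hA hB hd hadj ?_ (ihA heA) (ihB heB)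
    rwa [← heA.image_eq, ← heB.image_eq]
  | union A B hA hB hd hadj hcol _ _ ihA ihB =>
    have heA := he.mono Set.subset_union_left
    have heB := he.mono Set.subset_union_right
    refine .union A B hA hB hd hadj ?_ (ihA heA) (ihB heB)
    rwa [← heA.image_eq, ← heB.image_eq]

theorem HCOn.comp_injective {f : C → D} (hf : f.Injective) (h : HCOn G σ A) :
    HCOn G (f ∘ σ) A := by
  induction h with
  | single v => exact .single v
  | join A B hA hB hd hadj hcol _ _ ihA ihB =>
    refine .join A B hA hB hd hadj ?_ ihA ihB
    rw [Set.image_comp, Set.image_comp]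
    exact (Set.disjoint_image_iff hf).mpr hcol
  | union A B hA hB hd hadj hcol _ _ ihA ihB =>
    refine .union A B hA hB hd hadj ?_ ihA ihB
    rw [Set.image_comp, Set.image_comp]
    exact hcol.imp (Set.image_mono ·) (Set.image_mono ·)

theorem image_add_const_Iio (n m : ℕ) : (· + n) '' Set.Iio m = Set.Ico n (m + n) := by
  ext x
  constructor
  · rintro ⟨y, hy, rfl⟩
    simp only [Set.mem_Iio, Set.mem_Ico] at hy ⊢
    omega
  · rintro ⟨hnx, hxm⟩
    exact ⟨x - n, by simp only [Set.mem_Iio]; omega, by simp only; omega⟩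

/-- Colorings by initial segments of `ℕ` can always be glued: under a disjoint union the color
sets `Iio n` and `Iio m` are comparable, and under a join the colors of the second part are
shifted past those of the first. -/
theorem CographOn.exists_hcOn_image_eq_Iio (h : CographOn G A) :
    ∃ (σ : V → ℕ) (n : ℕ), σ '' A = Set.Iio n ∧ HCOn G σ A := by
  classical
  induction h with
  | single v => exact ⟨fun _ => 0, 1, by ext; simp, .single v⟩
  | union A B hA hB hd hadj _ _ ihA ihB =>
    obtain ⟨σA, n, hσA, hA'⟩ := ihA
    obtain ⟨σB, m, hσB, hB'⟩ := ihB
    have heA := Set.piecewise_eqOn A σA σB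
    have heB := (Set.piecewise_eqOn_compl A σA σB).mono hd.subset_compl_left
    refine ⟨A.piecewise σA σB, max n m, ?_, ?_⟩
    · rw [Set.image_union, heA.image_eq, heB.image_eq, hσA, hσB]
      ext; simp
    · refine .union A B hA hB hd hadj ?_ (hA'.congr_eqOn heA.symm) (hB'.congr_eqOn heB.symm)
      rw [heA.image_eq, heB.image_eq, hσA, hσB]
      exact (le_total n m).imp Set.Iio_subset_Iio Set.Iio_subset_Iio
  | join A B hA hB hd hadj _ _ ihA ihB =>
    obtain ⟨σA, n, hσA, hA'⟩ := ihA
    obtain ⟨σB, m, hσB, hB'⟩ := ihB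
    have heA := Set.piecewise_eqOn A σA ((· + n) ∘ σB)
    have heB := (Set.piecewise_eqOn_compl A σA ((· + n) ∘ σB)).mono hd.subset_compl_left
    have hσB' : ((· + n) ∘ σB) '' B = Set.Ico n (m + n) := by
      rw [Set.image_comp, hσB, image_add_const_Iio]
    refine ⟨A.piecewise σA ((· + n) ∘ σB), m + n, ?_, ?_⟩
    · rw [Set.image_union, heA.image_eq, heB.image_eq, hσA, hσB']
      exact Set.Iio_union_Ico_eq_Iio le_add_self
    · refine .join A B hA hB hd hadj ?_ (hA'.congr_eqOn heA.symm)
        ((hB'.comp_injective (add_left_injective n)).congr_eqOn heB.symm)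
      rw [heA.image_eq, heB.image_eq, hσA, hσB']
      exact (Set.Iio_disjoint_Ici le_rfl).mono_right Set.Ico_subset_Ici_self

end Coloring

theorem cograph_exists_hierarchical_coloring_general (G : SimpleGraph V)
    (h : IsCograph G) :
    ∃ (C : Type) (σ : V → C), IsHCCograph G σ := by
  obtain ⟨σ, -, -, hσ⟩ := h.exists_hcOn_image_eq_Iio
  exact ⟨ℕ, σ, hσ⟩

/-- For every cograph `G` there exists a vertex coloring `σ` such that `(G, σ)`
is an hc-cograph. -/
theorem cograph_exists_hierarchical_coloring [Fintype V] (G : SimpleGraph V)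
    (h : IsCograph G) :
    ∃ (C : Type) (σ : V → C), IsHCCograph G σ :=
  cograph_exists_hierarchical_coloring_general G h

end RBMGPaper
end

section
/- Let $(G,\sigma)$ be an edgeless vertex-colored graph whose vertices use exactly $n \geq 2$ distinct colors. Then there exists a set $F$ of unordered vertex pairs with $|F| = \binom{n}{2}$ such that $(G \triangle F, \sigma)$ is an hc-cograph; namely, choosing $n$ vertices of pairwise distinct colors and adding all $\binom{n}{2}$ edges between them yields an hc-cograph. -/
/-! Pick one vertex of each color and join them into a clique `K`. Adding the vertices of `K`
one at a time is a join (K2), since each brings a new color; every other vertex is isolated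
and carries a color already present in `K`, so it is added by a disjoint union (K3). The clique
has `n.choose 2` edges. -/

namespace RBMGPaper

variable {V : Type*} {C : Type*}

namespace HCOn

variable {G : SimpleGraph V} {σ : V → C}

theorem nonempty {A : Set V} (h : HCOn G σ A) : A.Nonempty := by
  cases h with
  | single v => exact Set.singleton_nonempty v
  | join A B hA => exact hA.mono Set.subset_union_left
  | union A B hA => exact hA.mono Set.subset_union_left

theorem insert_of_forall_adj {A : Set V} {v : V} (h : HCOn G σ A) (hv : v ∉ A)
    (hadj : ∀ a ∈ A, G.Adj v a) (hcol : σ v ∉ σ '' A) : HCOn G σ (insert v A) := by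
  rw [← Set.singleton_union]
  refine join {v} A (Set.singleton_nonempty v) h.nonempty (Set.disjoint_singleton_left.mpr hv)
    (fun a ha b hb => ?_) ?_ (single v) h
  · rw [Set.mem_singleton_iff.mp ha]
    exact hadj b hb
  · simpa [Set.image_singleton] using hcol

theorem insert_of_forall_not_adj {A : Set V} {v : V} (h : HCOn G σ A) (hv : v ∉ A)
    (hadj : ∀ a ∈ A, ¬ G.Adj a v) (hcol : σ v ∈ σ '' A) : HCOn G σ (insert v A) := by
  rw [← Set.union_singleton]
  refine union A {v} h.nonempty (Set.singleton_nonempty v) (Set.disjoint_singleton_right.mpr hv)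
    (fun a ha b hb => ?_) (Or.inr ?_) h (single v)
  · rw [Set.mem_singleton_iff.mp hb]
    exact hadj a ha
  · simpa [Set.image_singleton] using hcol

theorem of_isClique {s : Finset V} (hs : s.Nonempty) (hinj : Set.InjOn σ s)
    (hclique : G.IsClique (s : Set V)) : HCOn G σ s := by
  induction hs using Finset.Nonempty.cons_induction with
  | singleton v => simpa using single (G := G) (σ := σ) v
  | cons v s hv _ ih =>
    rw [Finset.coe_cons] at hinj hclique ⊢
    refine (ih (hinj.mono (Set.subset_insert v _)) (hclique.subset (Set.subset_insert v _)))
      |>.insert_of_forall_adj (by simpa using hv) (fun a ha => ?_) ?_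
    · exact hclique (Set.mem_insert v _) (Set.mem_insert_of_mem v ha)
        (ne_of_mem_of_not_mem ha hv).symm
    · rintro ⟨a, ha, hσ⟩
      exact hv (by simpa [hinj (Set.mem_insert_of_mem v ha) (Set.mem_insert v _) hσ] using ha)

theorem union_of_isolated [DecidableEq V] {A : Set V} (h : HCOn G σ A) (B : Finset V)
    (hdisj : Disjoint A B) (hiso : ∀ b ∈ B, ∀ u, ¬ G.Adj b u) (hcol : σ '' B ⊆ σ '' A) :
    HCOn G σ (A ∪ B) := by
  induction B using Finset.induction_on with
  | empty => simpa using h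
  | insert b B hb ih =>
    rw [Finset.coe_insert] at hdisj hcol ⊢
    rw [Set.union_insert]
    refine (ih (hdisj.mono_right (Set.subset_insert b _))
      (fun x hx => hiso x (Finset.mem_insert_of_mem hx))
      ((Set.image_mono (Set.subset_insert b _)).trans hcol)).insert_of_forall_not_adj ?_
      (fun a _ hab => hiso b (Finset.mem_insert_self b B) a hab.symm) ?_
    · rintro (hbA | hbB)
      · exact Set.disjoint_left.mp hdisj hbA (Set.mem_insert b _)
      · exact hb hbB
    · exact Set.image_mono Set.subset_union_left
        (hcol (Set.mem_image_of_mem σ (Set.mem_insert b _)))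

end HCOn

theorem isHCCograph_of_isClique [Fintype V] {G : SimpleGraph V} {σ : V → C} {S : Finset V}
    (hS : S.Nonempty) (hinj : Set.InjOn σ S) (hcol : σ '' S = Set.range σ)
    (hclique : G.IsClique (S : Set V)) (hiso : ∀ v ∉ S, ∀ u, ¬ G.Adj v u) :
    IsHCCograph G σ := by
  classical
  have h := (HCOn.of_isClique hS hinj hclique).union_of_isolated Sᶜ
    (by simpa using disjoint_compl_right) (fun v hv => hiso v (Finset.mem_compl.mp hv))
    (hcol ▸ Set.image_subset_range σ _)
  simpa [IsHCCograph] using h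

def completeOn (S : Finset V) : SimpleGraph V :=
  (⊤ : SimpleGraph S).map (Function.Embedding.subtype _)

theorem completeOn_adj {S : Finset V} {a b : V} :
    (completeOn S).Adj a b ↔ a ∈ S ∧ b ∈ S ∧ a ≠ b := by
  simp only [completeOn, SimpleGraph.map_adj, SimpleGraph.top_adj, Function.Embedding.subtype_apply]
  constructor
  · rintro ⟨a, b, hab, rfl, rfl⟩
    exact ⟨a.2, b.2, Subtype.coe_ne_coe.mpr hab⟩
  · rintro ⟨ha, hb, hab⟩
    exact ⟨⟨a, ha⟩, ⟨b, hb⟩, by simpa using hab, rfl, rfl⟩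

theorem ncard_edgeSet_completeOn (S : Finset V) :
    (completeOn S).edgeSet.ncard = S.card.choose 2 := by
  classical
  rw [completeOn, SimpleGraph.edgeSet_map,
    Set.ncard_image_of_injective _ (Function.Embedding.injective _),
    ← SimpleGraph.coe_edgeFinset, Set.ncard_coe_finset,
    SimpleGraph.card_edgeFinset_top_eq_card_choose_two, Fintype.card_coe]

theorem exists_finset_injOn_image_eq_range [Finite V] (σ : V → C) :
    ∃ S : Finset V, Set.InjOn σ S ∧ σ '' S = Set.range σ := by
  obtain ⟨S, himg, hinj⟩ := Set.exists_image_eq_and_injOn Set.univ σ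
  exact ⟨S.toFinite.toFinset, by simpa using hinj, by simpa using himg⟩

/-- Let `(G, σ)` be an edgeless vertex-colored graph whose vertices use exactly
`n ≥ 2` distinct colors.  Then there is a set `F` of unordered vertex pairs with
`|F| = n choose 2` such that `(G ∆ F, σ)` is an hc-cograph. -/
theorem edgeless_edit_to_hcCograph [Fintype V] (G : SimpleGraph V) (σ : V → C)
    (hE : G = ⊥) (n : ℕ) (hn : 2 ≤ n) (hcol : (Set.range σ).ncard = n) :
    ∃ F : Set (Sym2 V), (∀ e ∈ F, ¬ e.IsDiag) ∧ F.ncard = n.choose 2 ∧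
      IsHCCograph (SimpleGraph.fromEdgeSet (symmDiff G.edgeSet F)) σ := by
  obtain ⟨S, hinj, himg⟩ := exists_finset_injOn_image_eq_range σ
  have hcard : S.card = n := by
    rw [← hcol, ← himg, hinj.ncard_image, Set.ncard_coe_finset]
  have hS : S.Nonempty := Finset.card_pos.mp (by omega)
  refine ⟨(completeOn S).edgeSet, fun e he => SimpleGraph.not_isDiag_of_mem_edgeSet _ he,
    hcard ▸ ncard_edgeSet_completeOn S, ?_⟩
  rw [hE, SimpleGraph.edgeSet_bot, ← Set.bot_eq_empty, bot_symmDiff,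
    SimpleGraph.fromEdgeSet_edgeSet]
  exact isHCCograph_of_isClique hS hinj himg
    (fun a ha b hb hab => completeOn_adj.mpr ⟨ha, hb, hab⟩)
    (fun v hv u huv => hv (completeOn_adj.mp huv).1)

end RBMGPaper
end

section
/- The property of being an hc-cograph is not hereditary: there exists an hc-cograph $(G,\sigma)$ and a subset $W$ of its vertices such that the induced subgraph $(G[W], \sigma|_W)$ is not an hc-cograph. In particular, any hc-cograph containing two nonadjacent vertices of distinct colors has an induced subgraph on two vertices that is not an hc-cograph. -/
namespace RBMGPaper

variable {V : Type*} {C : Type*}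

/-!
A two-vertex hc-cograph can only arise from (K2) or (K3) applied to its two singletons, so its
vertices are adjacent or share a colour. The hc-cograph `K₂ + K₁` with colours `(a, b, a)` is
built by (K2) and then (K3), but its endpoint coloured `b` and its isolated vertex induce a
two-vertex graph violating this.
-/

theorem rel_of_mem_pair {α : Type*} {r : α → α → Prop} (hr : ∀ x y, r x y → r y x) {a b x y : α}
    (hx : x ∈ ({a, b} : Set α)) (hy : y ∈ ({a, b} : Set α)) (hxy : x ≠ y) (h : r x y) :
    r a b := by
  rcases hx with rfl | rfl <;> rcases hy with rfl | rfl
  exacts [absurd rfl hxy, h, hr _ _ h, absurd rfl hxy]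

theorem HCOn.adj_or_eq_of_pair {G : SimpleGraph V} {σ : V → C} {a b : V}
    (h : HCOn G σ {a, b}) (hab : a ≠ b) : G.Adj a b ∨ σ a = σ b := by
  have hsymm (x y : V) : G.Adj x y ∨ σ x = σ y → G.Adj y x ∨ σ y = σ x :=
    Or.imp G.adj_symm Eq.symm
  generalize hS : ({a, b} : Set V) = S at h
  cases h with
  | single v =>
    have ha : a ∈ ({v} : Set V) := hS ▸ Set.mem_insert a {b}
    have hb : b ∈ ({v} : Set V) := hS ▸ Set.mem_insert_of_mem a rfl
    exact absurd (ha.trans hb.symm) hab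
  | join A B hA hB hdisj hadj _ _ _ =>
    obtain ⟨⟨x, hx⟩, ⟨y, hy⟩⟩ := And.intro hA hB
    exact rel_of_mem_pair hsymm (hS ▸ Or.inl hx) (hS ▸ Or.inr hy)
      (hdisj.ne_of_mem hx hy) (Or.inl (hadj x hx y hy))
  | union A B hA hB hdisj _ hcol _ _ =>
    have key : ∃ x ∈ A, ∃ y ∈ B, σ x = σ y := by
      rcases hcol with hAB | hBA
      · obtain ⟨x, hx⟩ := hA
        obtain ⟨y, hy, hyx⟩ := hAB ⟨x, hx, rfl⟩
        exact ⟨x, hx, y, hy, hyx.symm⟩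
      · obtain ⟨y, hy⟩ := hB
        obtain ⟨x, hx, hxy⟩ := hBA ⟨y, hy, rfl⟩
        exact ⟨x, hx, y, hy, hxy⟩
    obtain ⟨x, hx, y, hy, hxy⟩ := key
    exact rel_of_mem_pair hsymm (hS ▸ Or.inl hx) (hS ▸ Or.inr hy)
      (hdisj.ne_of_mem hx hy) (Or.inr hxy)

theorem not_isHCCograph_induce_pair {G : SimpleGraph V} {σ : V → C} {u v : V} (huv : u ≠ v)
    (hadj : ¬ G.Adj u v) (hσ : σ u ≠ σ v) :
    ¬ IsHCCograph (G.induce {u, v}) (fun w => σ w.val) := by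
  intro h
  have huniv : (Set.univ : Set ({u, v} : Set V)) = {⟨u, .inl rfl⟩, ⟨v, .inr rfl⟩} := by
    ext ⟨w, rfl | rfl⟩ <;> simp
  unfold IsHCCograph at h
  rw [huniv] at h
  exact (h.adj_or_eq_of_pair (Subtype.coe_ne_coe.mp huv)).elim hadj hσ

theorem isHCCograph_edge_plus_vertex :
    IsHCCograph (SimpleGraph.fromEdgeSet {s(0, 1)} : SimpleGraph (Fin 3))
      ![false, true, false] := by
  set G : SimpleGraph (Fin 3) := SimpleGraph.fromEdgeSet {s(0, 1)}
  have hedge : HCOn G ![false, true, false] ({0} ∪ {1}) :=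
    .join _ _ (Set.singleton_nonempty _) (Set.singleton_nonempty _) (by simp)
      (by simp [G]) (by simp) (.single 0) (.single 1)
  have hall : HCOn G ![false, true, false] ({0} ∪ {1} ∪ {2}) :=
    .union _ _ (by simp) (Set.singleton_nonempty _) (by simp) (by simp [G])
      (Or.inr (by simp)) hedge (.single 2)
  have huniv : (Set.univ : Set (Fin 3)) = {0} ∪ {1} ∪ {2} := by
    ext x; fin_cases x <;> simp
  unfold IsHCCograph
  rwa [huniv]

/-- Being an hc-cograph is not hereditary: there is an hc-cograph `(G, σ)` and
a vertex subset `W` such that the induced subgraph `(G[W], σ|_W)` is not an hc-cograph.  In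
particular, any hc-cograph containing two nonadjacent vertices of distinct colors has an induced
subgraph on two vertices that is not an hc-cograph. -/
theorem hcCograph_not_hereditary :
    (∃ (V C : Type) (G : SimpleGraph V) (σ : V → C) (W : Set V),
      IsHCCograph G σ ∧ ¬ IsHCCograph (G.induce W) (fun w => σ w.val)) ∧
    (∀ (V C : Type*) (G : SimpleGraph V) (σ : V → C), IsHCCograph G σ →
      ∀ u v : V, u ≠ v → ¬ G.Adj u v → σ u ≠ σ v →
        ¬ IsHCCograph (G.induce {u, v}) (fun w => σ w.val)) :=
  ⟨⟨Fin 3, Bool, _, _, {1, 2}, isHCCograph_edge_plus_vertex,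
      not_isHCCograph_induce_pair (by decide) (by simp) (by decide)⟩,
    fun _ _ _ _ _ _ _ huv hadj hσ => not_isHCCograph_induce_pair huv hadj hσ⟩

end RBMGPaper
end
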